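/- arXiv:2409.01851 — 5 statements merged into one kernel-verified Lean document; each statement's English description precedes it below -/
import Mathlib

section
/- For every x ≠ 0, the solution of (ẋ, ẏ, ż) = (-z - 1, y, x + y) starting at (x, 0, 0) satisfies z(t) > 0 for t ∈ (0, 2 arctan x) and z(2 arctan x) = 0; moreover the solution of (ẋ, ẏ, ż) = (-z + 1, y, x + y) starting at (x,0,0) satisfies z(t) < 0 for t ∈ (-2 arctan x, 0) and z(-2 arctan x) = 0, and the two solutions agree at these hitting times, so that concatenating them yields a closed crossing periodic orbit through (x,0,0). -/
/-!
The vector field `(-z + c, y, x + y)` is the system above `Σ` for `c = -1` and below it for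
`c = 1`. It leaves the plane `y = 0` invariant and rotates it about `(0, 0, c)`, so by uniqueness
of solutions of a Lipschitz ODE both trajectories through `(x, 0, 0)` are explicit circles. The
half-angle identity `x sin t + cos t - 1 = 2 sin (t/2) (x cos (t/2) - sin (t/2))` shows that the
upper circle stays above `Σ` exactly until `t / 2 = arctan x`, and the lower circle is its mirror
image under `(t, z) ↦ (-t, -z)`.
-/

open Set Real

def affineField (c : ℝ) (p : ℝ × ℝ × ℝ) : ℝ × ℝ × ℝ := (-p.2.2 + c, p.2.1, p.1 + p.2.1)

noncomputable def rotationOrbit (c x t : ℝ) : ℝ × ℝ × ℝ :=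
  (x * cos t + c * sin t, 0, x * sin t - c * cos t + c)

lemma exists_lipschitzWith_affineField (c : ℝ) : ∃ K, LipschitzWith K (affineField c) := by
  have hx := LipschitzWith.prod_fst (α := ℝ) (β := ℝ × ℝ)
  have hy := LipschitzWith.prod_fst.comp (LipschitzWith.prod_snd (α := ℝ) (β := ℝ × ℝ))
  have hz := LipschitzWith.prod_snd.comp (LipschitzWith.prod_snd (α := ℝ) (β := ℝ × ℝ))
  exact ⟨_, (hz.neg.add (LipschitzWith.const c)).prodMk (hy.prodMk (hx.add hy))⟩

lemma hasDerivAt_rotationOrbit (c x t : ℝ) :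
    HasDerivAt (rotationOrbit c x) (affineField c (rotationOrbit c x t)) t := by
  have h1 := ((hasDerivAt_cos t).const_mul x).add ((hasDerivAt_sin t).const_mul c)
  have h3 := (((hasDerivAt_sin t).const_mul x).sub ((hasDerivAt_cos t).const_mul c)).add_const c
  refine HasDerivAt.congr_deriv (f := rotationOrbit c x)
    (h1.prodMk ((hasDerivAt_const t (0 : ℝ)).prodMk h3)) ?_
  simp only [affineField, rotationOrbit, Prod.mk.injEq]
  exact ⟨by ring, by simp, by ring⟩

lemma eq_rotationOrbit {c x : ℝ} {γ : ℝ → ℝ × ℝ × ℝ} (h0 : γ 0 = (x, 0, 0))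
    (hγ : ∀ t, HasDerivAt γ (affineField c (γ t)) t) : γ = rotationOrbit c x := by
  obtain ⟨K, hK⟩ := exists_lipschitzWith_affineField c
  refine ODE_solution_unique_univ (v := fun _ => affineField c) (s := fun _ => univ) (t₀ := 0)
    (fun _ => hK.lipschitzOnWith) (fun t => ⟨hγ t, mem_univ _⟩)
    (fun t => ⟨hasDerivAt_rotationOrbit c x t, mem_univ _⟩) ?_
  simp [h0, rotationOrbit]

lemma rotationOrbit_neg (c x t : ℝ) :
    rotationOrbit c x (-t) = ((rotationOrbit (-c) x t).1, (rotationOrbit (-c) x t).2.1,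
      -(rotationOrbit (-c) x t).2.2) := by
  simp only [rotationOrbit, sin_neg, cos_neg, Prod.mk.injEq]
  refine ⟨by ring, trivial, by ring⟩

lemma rotationOrbit_neg_one_snd_snd (x t : ℝ) :
    (rotationOrbit (-1) x t).2.2 = 2 * sin (t / 2) * (x * cos (t / 2) - sin (t / 2)) := by
  have h := sin_sq_add_cos_sq (t / 2)
  simp only [rotationOrbit]
  conv_lhs => rw [show t = 2 * (t / 2) by ring, sin_two_mul, cos_two_mul]
  linear_combination 2 * h

lemma mul_cos_sub_sin_pos {x θ : ℝ} (h0 : -(π / 2) < θ) (h : θ < arctan x) :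
    0 < x * cos θ - sin θ := by
  have hcos : 0 < cos θ := cos_pos_of_mem_Ioo ⟨h0, h.trans (arctan_lt_pi_div_two x)⟩
  have htan : tan θ < x := by
    rwa [← arctan_strictMono.lt_iff_lt, arctan_tan h0 (h.trans (arctan_lt_pi_div_two x))]
  rw [tan_eq_sin_div_cos, div_lt_iff₀ hcos] at htan
  linarith

lemma mul_cos_arctan_sub_sin_arctan (x : ℝ) : x * cos (arctan x) - sin (arctan x) = 0 := by
  rw [cos_arctan, sin_arctan]; ring

lemma rotationOrbit_neg_one_snd_snd_pos {x t : ℝ} (ht : t ∈ Ioo 0 (2 * arctan x)) :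
    0 < (rotationOrbit (-1) x t).2.2 := by
  obtain ⟨ht0, htx⟩ := ht
  have hsin : 0 < sin (t / 2) :=
    sin_pos_of_pos_of_lt_pi (by linarith) (by linarith [arctan_lt_pi_div_two x, pi_pos])
  have hcos : 0 < x * cos (t / 2) - sin (t / 2) :=
    mul_cos_sub_sin_pos (by linarith [pi_pos]) (by linarith)
  rw [rotationOrbit_neg_one_snd_snd]
  exact mul_pos (mul_pos two_pos hsin) hcos

lemma rotationOrbit_neg_one_two_mul_arctan_snd_snd (x : ℝ) :
    (rotationOrbit (-1) x (2 * arctan x)).2.2 = 0 := by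
  rw [rotationOrbit_neg_one_snd_snd, mul_div_cancel_left₀ _ two_ne_zero,
    mul_cos_arctan_sub_sin_arctan, mul_zero]

theorem stmt1_general (x : ℝ)
    (γp γm : ℝ → ℝ × ℝ × ℝ)
    (hp0 : γp 0 = (x, 0, 0))
    (hpode : ∀ t, HasDerivAt γp
      (-(γp t).2.2 - 1, (γp t).2.1, (γp t).1 + (γp t).2.1) t)
    (hm0 : γm 0 = (x, 0, 0))
    (hmode : ∀ t, HasDerivAt γm
      (-(γm t).2.2 + 1, (γm t).2.1, (γm t).1 + (γm t).2.1) t) :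
    (∀ t ∈ Ioo 0 (2 * Real.arctan x), 0 < (γp t).2.2) ∧
    (γp (2 * Real.arctan x)).2.2 = 0 ∧
    (∀ t ∈ Ioo (-(2 * Real.arctan x)) 0, (γm t).2.2 < 0) ∧
    (γm (-(2 * Real.arctan x))).2.2 = 0 ∧
    γp (2 * Real.arctan x) = γm (-(2 * Real.arctan x)) := by
  have hp : γp = rotationOrbit (-1) x :=
    eq_rotationOrbit hp0 fun t => by simpa only [affineField, ← sub_eq_add_neg] using hpode t
  have hm : γm = rotationOrbit 1 x := eq_rotationOrbit hm0 hmode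
  have hmirror := rotationOrbit_neg 1 x
  subst hp hm
  refine ⟨fun t ht => rotationOrbit_neg_one_snd_snd_pos ht,
    rotationOrbit_neg_one_two_mul_arctan_snd_snd x, fun t ht => ?_, ?_, ?_⟩
  · have hpos := rotationOrbit_neg_one_snd_snd_pos (x := x) (t := -t)
      ⟨by linarith [ht.2], by linarith [ht.1]⟩
    rw [← neg_neg t, hmirror]
    simpa using hpos
  · rw [hmirror, rotationOrbit_neg_one_two_mul_arctan_snd_snd, neg_zero]
  · rw [hmirror, rotationOrbit_neg_one_two_mul_arctan_snd_snd, neg_zero]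
    exact Prod.ext rfl (Prod.ext rfl (rotationOrbit_neg_one_two_mul_arctan_snd_snd x))

/-- For `x ≠ 0`, the solution of `(ẋ,ẏ,ż) = (-z-1, y, x+y)` starting at `(x,0,0)` has
positive third component on `(0, 2 arctan x)` and vanishing third component at `2 arctan x`;
the solution of `(ẋ,ẏ,ż) = (-z+1, y, x+y)` starting at `(x,0,0)` has negative third component
on `(-2 arctan x, 0)` and vanishing third component at `-2 arctan x`; moreover the two
solutions agree at these hitting times, yielding a closed crossing periodic orbit. -/
theorem stmt1 (x : ℝ) (hx : x ≠ 0)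
    (γp γm : ℝ → ℝ × ℝ × ℝ)
    (hp0 : γp 0 = (x, 0, 0))
    (hpode : ∀ t, HasDerivAt γp
      (-(γp t).2.2 - 1, (γp t).2.1, (γp t).1 + (γp t).2.1) t)
    (hm0 : γm 0 = (x, 0, 0))
    (hmode : ∀ t, HasDerivAt γm
      (-(γm t).2.2 + 1, (γm t).2.1, (γm t).1 + (γm t).2.1) t) :
    (∀ t ∈ Ioo 0 (2 * Real.arctan x), 0 < (γp t).2.2) ∧
    (γp (2 * Real.arctan x)).2.2 = 0 ∧
    (∀ t ∈ Ioo (-(2 * Real.arctan x)) 0, (γm t).2.2 < 0) ∧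
    (γm (-(2 * Real.arctan x))).2.2 = 0 ∧
    γp (2 * Real.arctan x) = γm (-(2 * Real.arctan x)) :=
  stmt1_general x γp γm hp0 hpode hm0 hmode
end

section
/- For 0 < x < 1, the solution of (ẋ, ẏ, ż) = (z - 1, y, x + y) starting at (x,0,0) first returns to the plane z = 0 at time τ⁺(x) = log((1+x)/(1-x)) > 0, i.e., its z-component vanishes at this time and is positive on (0, τ⁺(x)). -/
open Set Real

/-!
Along the solution through `(x, 0, 0)` the `y`-component stays `0`, and the remaining planar
linear system is solved by `x(t) = x cosh t - sinh t`, `z(t) = x sinh t + 1 - cosh t`. Since the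
vector field is Lipschitz, this is the only solution. Multiplying by `2 eᵗ` factors the third
component as `(eᵗ - 1) ((1 + x) - (1 - x) eᵗ)`, whose first factor vanishes only at `t = 0` and
whose second factor changes sign exactly at `eᵗ = (1 + x) / (1 - x)`.
-/

noncomputable def returnField (p : ℝ × ℝ × ℝ) : ℝ × ℝ × ℝ :=
  (p.2.2 - 1, p.2.1, p.1 + p.2.1)

lemma lipschitzWith_returnField : LipschitzWith 2 returnField := by
  have hy : LipschitzWith (1 * 1) fun p : ℝ × ℝ × ℝ ↦ p.2.1 :=
    LipschitzWith.prod_fst.comp LipschitzWith.prod_snd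
  have hz : LipschitzWith (1 * 1) fun p : ℝ × ℝ × ℝ ↦ p.2.2 :=
    LipschitzWith.prod_snd.comp LipschitzWith.prod_snd
  refine ((hz.sub (LipschitzWith.const 1)).prodMk
    (hy.prodMk (LipschitzWith.prod_fst.add hy))).weaken ?_
  norm_num

noncomputable def axisOrbit (x t : ℝ) : ℝ × ℝ × ℝ :=
  (x * cosh t - sinh t, 0, x * sinh t + 1 - cosh t)

lemma hasDerivAt_axisOrbit (x t : ℝ) :
    HasDerivAt (axisOrbit x) (returnField (axisOrbit x t)) t := by
  have h₁ := ((hasDerivAt_cosh t).const_mul x).sub (hasDerivAt_sinh t)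
  have h₃ := (((hasDerivAt_sinh t).const_mul x).add_const 1).sub (hasDerivAt_cosh t)
  refine (h₁.prodMk ((hasDerivAt_const t (0 : ℝ)).prodMk h₃)).congr_deriv ?_
  simp only [returnField, axisOrbit, add_zero]
  congr 1
  ring

lemma eq_axisOrbit {x : ℝ} {γ : ℝ → ℝ × ℝ × ℝ} (hγ : ∀ t, HasDerivAt γ (returnField (γ t)) t)
    (h0 : γ 0 = (x, 0, 0)) : γ = axisOrbit x :=
  ODE_solution_unique_univ (v := fun _ ↦ returnField) (s := fun _ ↦ univ) (t₀ := 0)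
    (fun _ ↦ lipschitzWith_returnField.lipschitzOnWith) (fun t ↦ ⟨hγ t, trivial⟩)
    (fun t ↦ ⟨hasDerivAt_axisOrbit x t, trivial⟩) (by simp [h0, axisOrbit])

lemma axisOrbit_snd_snd (x t : ℝ) :
    (axisOrbit x t).2.2 = (exp t - 1) * ((1 + x) - (1 - x) * exp t) / (2 * exp t) := by
  simp only [axisOrbit, sinh_eq, cosh_eq, exp_neg]
  field_simp
  ring

lemma one_sub_mul_exp_lt_iff {x t : ℝ} (hx0 : -1 < x) (hx1 : x < 1) :
    (1 - x) * exp t < 1 + x ↔ t < log ((1 + x) / (1 - x)) := by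
  rw [lt_log_iff_exp_lt (by apply div_pos <;> linarith), lt_div_iff₀ (by linarith), mul_comm]

/-- For `0 < x < 1`, the solution of `(ẋ,ẏ,ż) = (z-1, y, x+y)` starting at `(x,0,0)`
first returns to the plane `z = 0` at time `τ⁺(x) = log((1+x)/(1-x)) > 0`: its third
component is positive on `(0, τ⁺(x))` and vanishes at `τ⁺(x)`. -/
theorem stmt3 (x : ℝ) (hx0 : 0 < x) (hx1 : x < 1)
    (γ : ℝ → ℝ × ℝ × ℝ)
    (h0 : γ 0 = (x, 0, 0))
    (hode : ∀ t, HasDerivAt γ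
      ((γ t).2.2 - 1, (γ t).2.1, (γ t).1 + (γ t).2.1) t) :
    0 < Real.log ((1 + x) / (1 - x)) ∧
    (γ (Real.log ((1 + x) / (1 - x)))).2.2 = 0 ∧
    ∀ t ∈ Ioo 0 (Real.log ((1 + x) / (1 - x))), 0 < (γ t).2.2 := by
  obtain rfl : γ = axisOrbit x := eq_axisOrbit hode h0
  have hexp : (1 - x) * exp (log ((1 + x) / (1 - x))) = 1 + x := by
    rw [exp_log (by apply div_pos <;> linarith)]
    field_simp [show 1 - x ≠ 0 by linarith]
  refine ⟨?_, by simp [axisOrbit_snd_snd, hexp], fun t ht ↦ ?_⟩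
  · rw [← one_sub_mul_exp_lt_iff (by linarith) hx1, exp_zero]
    linarith
  · rw [axisOrbit_snd_snd]
    have hlt := (one_sub_mul_exp_lt_iff (by linarith) hx1).2 ht.2
    have hgt := one_lt_exp_iff.2 ht.1
    apply div_pos (mul_pos _ _) (by positivity) <;> linarith
end

section
/- The Wronskians of the ordered family f₀(u)=u, f₁(u)=u², f₂(u)=u³, f₃(u)=u√(1−4u²), f₄(u)=u² arccos(−√(1−4u²)), f₅(u)=√(1−4u²)−1, f₆(u)=(√(1−4u²)−1)·arccos(−√(1−4u²)) satisfy, on (0, 1/4): W[f₀](u)=u hence the claimed formulas W[f₀,f₁](u)=u² (up to constant), and in particular W[f₀,f₁,f₂,f₃](u) = −96 u⁵/(1−4u²)^{5/2}, which is nonzero on (0, 1/4). -/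
open Set Real

/-- The Wronskian of two functions. -/
noncomputable def wronskian2 (f g : ℝ → ℝ) (u : ℝ) : ℝ :=
  Matrix.det !![f u, g u; deriv f u, deriv g u]

/-- The Wronskian of four functions. -/
noncomputable def wronskian4 (f g h k : ℝ → ℝ) (u : ℝ) : ℝ :=
  Matrix.det !![f u, g u, h u, k u;
                deriv f u, deriv g u, deriv h u, deriv k u;
                iteratedDeriv 2 f u, iteratedDeriv 2 g u, iteratedDeriv 2 h u, iteratedDeriv 2 k u;
                iteratedDeriv 3 f u, iteratedDeriv 3 g u, iteratedDeriv 3 h u, iteratedDeriv 3 k u]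

/-! With `s = √(1 - 4u²)`, the derivatives of `u s` are `(1 - 8u²)/s`, `(32u³ - 12u)/s³` and
`-12/s⁵`. Expanding along the last column, `W[u, u², u³, f] = 2u³f''' - 6u²f'' + 12uf' - 12f`,
and substituting these values and clearing `s⁵` with `s² = 1 - 4u²` leaves `-96u⁵`. -/

lemma iteratedDeriv_succ_eqOn {U : Set ℝ} (hU : IsOpen U) {n : ℕ} {f g g' : ℝ → ℝ}
    (hg : EqOn (iteratedDeriv n f) g U) (hg' : ∀ x ∈ U, HasDerivAt g (g' x) x) :
    EqOn (iteratedDeriv (n + 1) f) g' U := by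
  intro x hx
  rw [iteratedDeriv_succ, (hg.eventuallyEq_of_mem (hU.mem_nhds hx)).deriv_eq]
  exact (hg' x hx).deriv

lemma iteratedDeriv_eqOn_of_hasDerivAt {U : Set ℝ} (hU : IsOpen U) {f f₁ f₂ f₃ : ℝ → ℝ}
    (hf : ∀ x ∈ U, HasDerivAt f (f₁ x) x) (hf₁ : ∀ x ∈ U, HasDerivAt f₁ (f₂ x) x)
    (hf₂ : ∀ x ∈ U, HasDerivAt f₂ (f₃ x) x) :
    EqOn (deriv f) f₁ U ∧ EqOn (iteratedDeriv 2 f) f₂ U ∧ EqOn (iteratedDeriv 3 f) f₃ U := by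
  have h₁ : EqOn (iteratedDeriv 1 f) f₁ U :=
    iteratedDeriv_succ_eqOn hU (fun x _ ↦ by rw [iteratedDeriv_zero]) hf
  have h₂ := iteratedDeriv_succ_eqOn hU h₁ hf₁
  exact ⟨iteratedDeriv_one (f := f) ▸ h₁, h₂, iteratedDeriv_succ_eqOn hU h₂ hf₂⟩

lemma wronskian4_id_sq_cube (f : ℝ → ℝ) (x : ℝ) :
    wronskian4 (fun u ↦ u) (fun u ↦ u ^ 2) (fun u ↦ u ^ 3) f x =
      2 * x ^ 3 * iteratedDeriv 3 f x - 6 * x ^ 2 * iteratedDeriv 2 f x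
        + 12 * x * deriv f x - 12 * f x := by
  have hpoly {g g₁ g₂ g₃ : ℝ → ℝ} (hg : ∀ x, HasDerivAt g (g₁ x) x)
      (hg₁ : ∀ x, HasDerivAt g₁ (g₂ x) x) (hg₂ : ∀ x, HasDerivAt g₂ (g₃ x) x) :=
    iteratedDeriv_eqOn_of_hasDerivAt isOpen_univ (fun x _ ↦ hg x) (fun x _ ↦ hg₁ x)
      (fun x _ ↦ hg₂ x)
  obtain ⟨-, d₁₂, d₁₃⟩ := hpoly hasDerivAt_id' (fun _ ↦ hasDerivAt_const _ (1 : ℝ))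
    (fun _ ↦ hasDerivAt_const _ (0 : ℝ))
  obtain ⟨d₂, d₂₂, d₂₃⟩ := hpoly (g₁ := fun x ↦ 2 * x) (g₂ := fun _ ↦ 2)
    (fun x ↦ by simpa using hasDerivAt_pow 2 x) (fun x ↦ by simpa using (hasDerivAt_id' x).const_mul 2) (fun _ ↦ hasDerivAt_const _ (2 : ℝ))
  obtain ⟨d₃, d₃₂, d₃₃⟩ := hpoly (g₁ := fun x ↦ 3 * x ^ 2) (g₂ := fun x ↦ 6 * x)
    (fun x ↦ by simpa using hasDerivAt_pow 3 x)
    (fun x ↦ ((hasDerivAt_pow 2 x).const_mul 3).congr_deriv (by ring))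
    (fun x ↦ by simpa using (hasDerivAt_id' x).const_mul 6)
  simp only [wronskian4, deriv_id'', d₁₂ trivial, d₁₃ trivial, d₂ trivial, d₂₂ trivial,
    d₂₃ trivial, d₃ trivial, d₃₂ trivial, d₃₃ trivial]
  simp [Matrix.det_succ_row_zero, Fin.sum_univ_succ, Fin.succAbove]
  ring

lemma hasDerivAt_sqrt_one_sub_four_mul_sq {x : ℝ} (h : 0 < 1 - 4 * x ^ 2) :
    HasDerivAt (fun u ↦ √(1 - 4 * u ^ 2)) (-4 * x / √(1 - 4 * x ^ 2)) x := by
  have hinner : HasDerivAt (fun u ↦ 1 - 4 * u ^ 2) (-(8 * x)) x :=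
    (((hasDerivAt_pow 2 x).const_mul 4).const_sub 1).congr_deriv (by ring)
  refine ((hasDerivAt_sqrt h.ne').comp x hinner).congr_deriv ?_
  field_simp
  ring

lemma hasDerivAt_mul_sqrt_one_sub_four_mul_sq {x : ℝ} (h : 0 < 1 - 4 * x ^ 2) :
    HasDerivAt (fun u ↦ u * √(1 - 4 * u ^ 2)) ((1 - 8 * x ^ 2) / √(1 - 4 * x ^ 2)) x := by
  refine ((hasDerivAt_id' x).mul (hasDerivAt_sqrt_one_sub_four_mul_sq h)).congr_deriv ?_
  have hs : 0 < √(1 - 4 * x ^ 2) := sqrt_pos.2 h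
  field_simp
  linear_combination sq_sqrt h.le

lemma hasDerivAt_one_sub_eight_mul_sq_div_sqrt {x : ℝ} (h : 0 < 1 - 4 * x ^ 2) :
    HasDerivAt (fun u ↦ (1 - 8 * u ^ 2) / √(1 - 4 * u ^ 2))
      ((32 * x ^ 3 - 12 * x) / √(1 - 4 * x ^ 2) ^ 3) x := by
  have hnum : HasDerivAt (fun u ↦ 1 - 8 * u ^ 2) (-(16 * x)) x :=
    (((hasDerivAt_pow 2 x).const_mul 8).const_sub 1).congr_deriv (by ring)
  have hs : 0 < √(1 - 4 * x ^ 2) := sqrt_pos.2 h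
  refine (hnum.div (hasDerivAt_sqrt_one_sub_four_mul_sq h) hs.ne').congr_deriv ?_
  have hs2 := sq_sqrt h.le
  generalize √(1 - 4 * x ^ 2) = s at hs hs2 ⊢
  field_simp
  linear_combination (-16 * x) * hs2

lemma hasDerivAt_div_sqrt_one_sub_four_mul_sq_pow_three {x : ℝ} (h : 0 < 1 - 4 * x ^ 2) :
    HasDerivAt (fun u ↦ (32 * u ^ 3 - 12 * u) / √(1 - 4 * u ^ 2) ^ 3)
      (-12 / √(1 - 4 * x ^ 2) ^ 5) x := by
  have hnum : HasDerivAt (fun u ↦ 32 * u ^ 3 - 12 * u) (96 * x ^ 2 - 12) x :=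
    (((hasDerivAt_pow 3 x).const_mul 32).sub ((hasDerivAt_id' x).const_mul 12)).congr_deriv
      (by ring)
  have hs : 0 < √(1 - 4 * x ^ 2) := sqrt_pos.2 h
  refine (hnum.div ((hasDerivAt_sqrt_one_sub_four_mul_sq h).fun_pow 3)
    (by positivity)).congr_deriv ?_
  have hs2 := sq_sqrt h.le
  generalize √(1 - 4 * x ^ 2) = s at hs hs2 ⊢
  field_simp
  linear_combination (96 * x ^ 2 - 12) * s ^ 2 * hs2

lemma wronskian4_id_sq_cube_mul_sqrt {x : ℝ} (h : 0 < 1 - 4 * x ^ 2) :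
    wronskian4 (fun u ↦ u) (fun u ↦ u ^ 2) (fun u ↦ u ^ 3) (fun u ↦ u * √(1 - 4 * u ^ 2)) x =
      -96 * x ^ 5 / √(1 - 4 * x ^ 2) ^ 5 := by
  obtain ⟨d₁, d₂, d₃⟩ := iteratedDeriv_eqOn_of_hasDerivAt (U := {y | 0 < 1 - 4 * y ^ 2})
    (isOpen_lt continuous_const (by fun_prop))
    (fun _ hy ↦ hasDerivAt_mul_sqrt_one_sub_four_mul_sq hy)
    (fun _ hy ↦ hasDerivAt_one_sub_eight_mul_sq_div_sqrt hy)
    (fun _ hy ↦ hasDerivAt_div_sqrt_one_sub_four_mul_sq_pow_three hy)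
  rw [wronskian4_id_sq_cube, d₁ h, d₂ h, d₃ h]
  beta_reduce
  have hs : 0 < √(1 - 4 * x ^ 2) := sqrt_pos.2 h
  have hs2 := sq_sqrt h.le
  generalize √(1 - 4 * x ^ 2) = s at hs hs2 ⊢
  field_simp
  linear_combination (72 * x ^ 3 - 192 * x ^ 5 + (12 * x - 96 * x ^ 3) * (s ^ 2 + 1 - 4 * x ^ 2)
    - 12 * x * (s ^ 4 + s ^ 2 * (1 - 4 * x ^ 2) + (1 - 4 * x ^ 2) ^ 2)) * hs2

/-- On `(0, 1/4)` the initial Wronskians of the family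
`f₀(u)=u, f₁(u)=u², f₂(u)=u³, f₃(u)=u√(1−4u²), …` satisfy `W[f₀](u) = u`,
`W[f₀,f₁](u) = u²`, and `W[f₀,f₁,f₂,f₃](u) = −96u⁵/(1−4u²)^{5/2} ≠ 0`. -/
theorem stmt13 :
    ∀ u ∈ Ioo (0 : ℝ) (1 / 4),
      (fun u : ℝ => u) u = u ∧
      wronskian2 (fun u => u) (fun u => u ^ 2) u = u ^ 2 ∧
      wronskian4 (fun u => u) (fun u => u ^ 2) (fun u => u ^ 3)
          (fun u => u * Real.sqrt (1 - 4 * u ^ 2)) u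
        = -96 * u ^ 5 / (1 - 4 * u ^ 2) ^ ((5 : ℝ) / 2) ∧
      wronskian4 (fun u => u) (fun u => u ^ 2) (fun u => u ^ 3)
          (fun u => u * Real.sqrt (1 - 4 * u ^ 2)) u ≠ 0 := by
  rintro u ⟨hu₀, hu₁⟩
  have h : 0 < 1 - 4 * u ^ 2 := by nlinarith
  have hpow : (1 - 4 * u ^ 2) ^ ((5 : ℝ) / 2) = √(1 - 4 * u ^ 2) ^ 5 := by
    rw [rpow_div_two_eq_sqrt _ h.le]
    norm_cast
  have hW := wronskian4_id_sq_cube_mul_sqrt h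
  rw [← hpow] at hW
  refine ⟨rfl, ?_, hW, ?_⟩
  · simp [wronskian2, Matrix.det_fin_two_of]
    ring
  · rw [hW]
    exact div_ne_zero (by positivity) (rpow_pos_of_pos h _).ne'
end

section
/- The seven functions u, u², u³, u√(1−4u²), u² arccos(−√(1−4u²)), √(1−4u²)−1, (√(1−4u²)−1) arccos(−√(1−4u²)) are linearly independent over ℝ as functions on (0, 1/4). -/
/-!
Substituting `u = sin t / 2` with `t ∈ (0, π/6)` turns `√(1 - 4u²)` into `cos t` and
`arccos (-√(1 - 4u²))` into `π - t`, so the combination becomes a real analytic function of `t`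
on all of `ℝ`. It vanishes on `(0, π/6)`, hence everywhere; the non-periodic factor `π - t`
then separates the coefficients, and evaluations at `π, 3π, π/2, 5π/2, -π/2, arcsin (3/5)` and
`π - arcsin (3/5)` force all of them to vanish.
-/

open Set Real

noncomputable def sinHalfCombination (c : Fin 7 → ℝ) (t : ℝ) : ℝ :=
  c 0 * (sin t / 2) + c 1 * (sin t / 2) ^ 2 + c 2 * (sin t / 2) ^ 3
    + c 3 * ((sin t / 2) * cos t)
    + c 4 * ((sin t / 2) ^ 2 * (π - t))
    + c 5 * (cos t - 1)
    + c 6 * ((cos t - 1) * (π - t))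

theorem analyticOnNhd_sinHalfCombination (c : Fin 7 → ℝ) :
    AnalyticOnNhd ℝ (sinHalfCombination c) univ := by
  intro t _
  unfold sinHalfCombination
  fun_prop

theorem AnalyticOnNhd.eq_zero_of_eqOn_zero_Ioo {E : Type*} [NormedAddCommGroup E]
    [NormedSpace ℝ E] {f : ℝ → E} (hf : AnalyticOnNhd ℝ f univ) {a b : ℝ} (hab : a < b)
    (hzero : EqOn f 0 (Ioo a b)) : f = 0 := by
  obtain ⟨t, ht⟩ := nonempty_Ioo.2 hab
  exact hf.eq_of_eventuallyEq analyticOnNhd_const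
    (Filter.eventuallyEq_of_mem (isOpen_Ioo.mem_nhds ht) hzero)

theorem sqrt_one_sub_four_mul_sin_half_sq {t : ℝ} (ht : t ∈ Icc (-(π / 2)) (π / 2)) :
    √(1 - 4 * (sin t / 2) ^ 2) = cos t := by
  rw [show 1 - 4 * (sin t / 2) ^ 2 = cos t ^ 2 by nlinarith [sin_sq_add_cos_sq t],
    sqrt_sq (cos_nonneg_of_mem_Icc ht)]

theorem sin_half_mem_Ioo {t : ℝ} (ht : t ∈ Ioo 0 (π / 6)) : sin t / 2 ∈ Ioo (0 : ℝ) (1 / 4) := by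
  obtain ⟨ht0, ht6⟩ := ht
  have hsin_pos : 0 < sin t := sin_pos_of_pos_of_lt_pi ht0 (by linarith [pi_pos])
  have hsin_lt : sin t < 1 / 2 := by
    rw [← sin_pi_div_six]
    exact strictMonoOn_sin ⟨by linarith, by linarith [pi_pos]⟩
      ⟨by linarith [pi_pos], by linarith [pi_pos]⟩ ht6
  constructor <;> linarith

theorem coeffs_eq_zero_of_sinHalfCombination_eq_zero {c : Fin 7 → ℝ}
    (hc : sinHalfCombination c = 0) : ∀ i, c i = 0 := by
  have hc' (t : ℝ) : sinHalfCombination c t = 0 := congrFun hc t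
  have e1 := hc' π
  have e2 := hc' (π + 2 * π)
  have e3 := hc' (π / 2)
  have e4 := hc' (π / 2 + 2 * π)
  have e5 := hc' (-(π / 2))
  simp only [sinHalfCombination, sin_pi, cos_pi, sin_add_two_pi, cos_add_two_pi,
    sin_pi_div_two, cos_pi_div_two, sin_neg, cos_neg] at e1 e2 e3 e4 e5
  have pi_pos := pi_pos
  have hc5 : c 5 = 0 := by nlinarith
  have hc6 : c 6 = 0 := by nlinarith
  have hc4 : c 4 = 0 := by nlinarith
  -- `t ↦ π - t` flips the sign of `cos t` only, and the 3-4-5 angle has rational `sin` and `cos`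
  set a := arcsin (3 / 5)
  have hsa : sin a = 3 / 5 := sin_arcsin (by norm_num) (by norm_num)
  have hca : cos a = 4 / 5 := by
    rw [cos_arcsin, show (1 : ℝ) - (3 / 5) ^ 2 = (4 / 5) ^ 2 by norm_num]
    exact sqrt_sq (by norm_num)
  have e6 := hc' a
  have e7 := hc' (π - a)
  simp only [sinHalfCombination, sin_pi_sub, cos_pi_sub, hsa, hca] at e6 e7
  rw [hc4, hc5, hc6] at e3 e5 e6 e7
  norm_num at e3 e5 e6 e7
  have hc1 : c 1 = 0 := by linarith
  have hc2 : c 2 = 0 := by linarith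
  have hc0 : c 0 = 0 := by linarith
  have hc3 : c 3 = 0 := by linarith
  intro i
  fin_cases i <;> assumption

/-- The seven functions `u, u², u³, u√(1−4u²), u² arccos(−√(1−4u²)), √(1−4u²)−1,
(√(1−4u²)−1) arccos(−√(1−4u²))` are linearly independent over `ℝ` on `(0, 1/4)`. -/
theorem stmt14 (c : Fin 7 → ℝ)
    (h : ∀ u ∈ Ioo (0 : ℝ) (1 / 4),
      c 0 * u + c 1 * u ^ 2 + c 2 * u ^ 3
        + c 3 * (u * Real.sqrt (1 - 4 * u ^ 2))
        + c 4 * (u ^ 2 * Real.arccos (-Real.sqrt (1 - 4 * u ^ 2)))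
        + c 5 * (Real.sqrt (1 - 4 * u ^ 2) - 1)
        + c 6 * ((Real.sqrt (1 - 4 * u ^ 2) - 1)
            * Real.arccos (-Real.sqrt (1 - 4 * u ^ 2))) = 0) :
    ∀ i, c i = 0 := by
  refine coeffs_eq_zero_of_sinHalfCombination_eq_zero
    ((analyticOnNhd_sinHalfCombination c).eq_zero_of_eqOn_zero_Ioo (b := π / 6)
      (by positivity) fun t ht => ?_)
  have hsqrt : √(1 - 4 * (sin t / 2) ^ 2) = cos t :=
    sqrt_one_sub_four_mul_sin_half_sq ⟨by linarith [ht.1, pi_pos], by linarith [ht.2, pi_pos]⟩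
  have harccos : arccos (-cos t) = π - t := by
    rw [arccos_neg, arccos_cos ht.1.le (by linarith [ht.2, pi_pos])]
  simpa [hsqrt, harccos, sinHalfCombination] using h _ (sin_half_mem_Ioo ht)
end

section
/- Let g₀(u)=u³(1+u²)², g₁(u)=u³(1+u²)² θ(u), g₂(u)=u(1 − 2u⁴ − u⁶), g₃(u)=u(1 − 2u⁴ − u⁶) θ(u), where θ(u) = arctan(2u/(u²−1)). Then the family of 9 functions 1, u², u⁴, u⁶, u⁸, g₀, g₁, g₂, g₃ is linearly independent on (0, 1). -/
open Set Real Filter Topology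

set_option maxHeartbeats 2000000

lemma thetaEq (u : ℝ) (hu : u ∈ Ioo (0:ℝ) 1) :
    Real.arctan (2 * u / (u ^ 2 - 1)) = -(2 * Real.arctan u) := by
  obtain ⟨h0, h1⟩ := hu
  have ha0 : 0 < Real.arctan u := by simpa using Real.arctan_strictMono h0
  have ha1 : Real.arctan u < π / 4 := by
    rw [← Real.arctan_one]
    exact Real.arctan_strictMono h1
  have hne : u ^ 2 - 1 ≠ 0 := by nlinarith
  have key : Real.tan (-(2 * Real.arctan u)) = 2 * u / (u ^ 2 - 1) := by
    rw [Real.tan_neg, Real.tan_two_mul, Real.tan_arctan]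
    have h2 : (1:ℝ) - u ^ 2 ≠ 0 := by nlinarith
    field_simp
    ring
  rw [← key, Real.arctan_tan] <;> nlinarith [Real.pi_pos]

lemma arctan_taylor (u : ℝ) (hu : 0 ≤ u) :
    |Real.arctan u - (u - u^3/3 + u^5/5 - u^7/7 + u^9/9 - u^11/11 + u^13/13)| ≤ u^15/15 := by
  have hderiv : ∀ s : ℝ, ∀ x : ℝ,
      HasDerivAt (fun x : ℝ => x^15/15 + s * (Real.arctan x - (x - x^3/3 + x^5/5 - x^7/7 + x^9/9 - x^11/11 + x^13/13)))
        (x^14 + s * (-(x^14 / (1 + x^2)))) x := by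
    intro s x
    have hp : ∀ n : ℕ, HasDerivAt (fun x : ℝ => x ^ n) (n * x ^ (n-1)) x := fun n => hasDerivAt_pow n x
    have harc : HasDerivAt Real.arctan (1 / (1 + x ^ 2)) x := Real.hasDerivAt_arctan x
    have hpoly : HasDerivAt (fun x : ℝ => x - x^3/3 + x^5/5 - x^7/7 + x^9/9 - x^11/11 + x^13/13)
        (1 - (3:ℕ) * x^2/3 + (5:ℕ) * x^4/5 - (7:ℕ) * x^6/7 + (9:ℕ) * x^8/9 - (11:ℕ) * x^10/11 + (13:ℕ) * x^12/13) x := by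
      exact ((((((hasDerivAt_id x).sub ((hp 3).div_const 3)).add ((hp 5).div_const 5)).sub
        ((hp 7).div_const 7)).add ((hp 9).div_const 9)).sub ((hp 11).div_const 11)).add ((hp 13).div_const 13)
    have : HasDerivAt (fun x : ℝ => x^15/15 + s * (Real.arctan x - (x - x^3/3 + x^5/5 - x^7/7 + x^9/9 - x^11/11 + x^13/13)))
        (((15:ℕ):ℝ) * x ^ (15-1) / 15 + s * (1 / (1 + x ^ 2) - (1 - (3:ℕ) * x^2/3 + (5:ℕ) * x^4/5 - (7:ℕ) * x^6/7 + (9:ℕ) * x^8/9 - (11:ℕ) * x^10/11 + (13:ℕ) * x^12/13))) x :=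
      ((hp 15).div_const 15).add ((harc.sub hpoly).const_mul s)
    convert this using 1
    have hx : (1:ℝ) + x ^ 2 ≠ 0 := by positivity
    push_cast
    field_simp
    ring
  have mono : ∀ s : ℝ, s = 1 ∨ s = -1 →
      Monotone (fun x : ℝ => x^15/15 + s * (Real.arctan x - (x - x^3/3 + x^5/5 - x^7/7 + x^9/9 - x^11/11 + x^13/13))) := by
    intro s hs
    apply monotone_of_deriv_nonneg
    · intro x
      exact (hderiv s x).differentiableAt
    · intro x
      rw [(hderiv s x).deriv]
      have hx : (0:ℝ) < 1 + x ^ 2 := by positivity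
      have h14 : (0:ℝ) ≤ x ^ 14 := by positivity
      have : |x^14 / (1 + x^2)| ≤ x ^ 14 := by
        rw [abs_of_nonneg (by positivity)]
        rw [div_le_iff₀ hx]
        nlinarith
      rcases hs with rfl | rfl <;> rw [abs_le] at this <;> nlinarith [this.1, this.2]
  rw [abs_le]
  constructor
  · have h := mono 1 (Or.inl rfl) hu
    norm_num [Real.arctan_zero] at h
    linarith
  · have h := mono (-1) (Or.inr rfl) hu
    norm_num [Real.arctan_zero] at h
    linarith

lemma step (q : ℝ → ℝ) (a C : ℝ) (hC : 0 ≤ C) (hq : Continuous q) (m : ℕ)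
    (H : ∀ u ∈ Ioo (0:ℝ) 1, |a + u * q u| ≤ C * u ^ (m + 1)) :
    a = 0 ∧ ∀ u ∈ Ioo (0:ℝ) 1, |q u| ≤ C * u ^ m := by
  have ha : a = 0 := by
    have h1 : Tendsto (fun u : ℝ => a + u * q u) (𝓝[>] (0:ℝ)) (𝓝 a) := by
      have hc : Continuous (fun u : ℝ => a + u * q u) := continuous_const.add (continuous_id.mul hq)
      have h := (hc.tendsto 0).mono_left (nhdsWithin_le_nhds (s := Ioi (0:ℝ)))
      simpa using h
    have h2 : Tendsto (fun u : ℝ => a + u * q u) (𝓝[>] (0:ℝ)) (𝓝 0) := by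
      have hb : ∀ᶠ u in 𝓝[>] (0:ℝ), ‖a + u * q u‖ ≤ C * u ^ (m+1) := by
        filter_upwards [Ioo_mem_nhdsGT_of_mem (by constructor <;> norm_num : (0:ℝ) ∈ Ico (0:ℝ) 1)]
          with u hu
        simpa [Real.norm_eq_abs] using H u hu
      have hg : Tendsto (fun u : ℝ => C * u ^ (m+1)) (𝓝[>] (0:ℝ)) (𝓝 0) := by
        have hc : Continuous fun u : ℝ => C * u ^ (m+1) := by continuity
        have h := (hc.tendsto 0).mono_left (nhdsWithin_le_nhds (s := Ioi (0:ℝ)))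
        simpa using h
      exact squeeze_zero_norm' hb hg
    exact tendsto_nhds_unique h1 h2
  refine ⟨ha, fun u hu => ?_⟩
  have hu0 : 0 < u := hu.1
  have hH := H u hu
  rw [ha, zero_add, abs_mul, abs_of_pos hu0, pow_succ] at hH
  have heq : C * (u ^ m * u) = u * (C * u ^ m) := by ring
  rw [heq] at hH
  exact le_of_mul_le_mul_left hH hu0


/-- The nine functions `1, u², u⁴, u⁶, u⁸, u³(1+u²)², u³(1+u²)²θ(u), u(1−2u⁴−u⁶),
u(1−2u⁴−u⁶)θ(u)`, where `θ(u) = arctan(2u/(u²−1))`, are linearly independent on `(0,1)`. -/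
theorem stmt17 (c : Fin 9 → ℝ)
    (h : ∀ u ∈ Ioo (0 : ℝ) 1,
      c 0 * 1 + c 1 * u ^ 2 + c 2 * u ^ 4 + c 3 * u ^ 6 + c 4 * u ^ 8
        + c 5 * (u ^ 3 * (1 + u ^ 2) ^ 2)
        + c 6 * (u ^ 3 * (1 + u ^ 2) ^ 2 * Real.arctan (2 * u / (u ^ 2 - 1)))
        + c 7 * (u * (1 - 2 * u ^ 4 - u ^ 6))
        + c 8 * (u * (1 - 2 * u ^ 4 - u ^ 6) * Real.arctan (2 * u / (u ^ 2 - 1))) = 0) :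
    ∀ i, c i = 0 := by
  set C := |c 6| + |c 8| with hCdef
  have hC : 0 ≤ C := by positivity
  have H0 : ∀ u ∈ Ioo (0:ℝ) 1, |c 0 + u * (c 7 + u * (c 1 + (-2)*c 8 + u * (c 5 + u * (c 2 + (-2)*c 6 + (2/3)*c 8 + u * ((2)*c 5 + (-2)*c 7 + u * (c 3 + (-10/3)*c 6 + (18/5)*c 8 + u * (c 5 + (-1)*c 7 + u * (c 4 + (-16/15)*c 6 + (20/21)*c 8 + u * ((0:ℝ) + u * ((16/105)*c 6 + (-4/45)*c 8 + u * ((0:ℝ) + u * ((-16/315)*c 6 + (4/385)*c 8 + u * ((0:ℝ) + u * ((16/693)*c 6 + (4/819)*c 8 + u * ((0:ℝ) + u * ((-16/1287)*c 6 + (-14/99)*c 8 + u * ((0:ℝ) + u * ((-18/143)*c 6 + (18/143)*c 8 + u * ((0:ℝ) + u * ((-2/13)*c 6 + (2/13)*c 8))))))))))))))))))))| ≤ C * u ^ (13 + 1) := by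
    intro u hu
    obtain ⟨hu0, hu1⟩ := hu
    have hθ := thetaEq u ⟨hu0, hu1⟩
    have hP := h u ⟨hu0, hu1⟩
    rw [hθ] at hP
    have hE := arctan_taylor u hu0.le
    have hp : ∀ n : ℕ, u ^ n ≤ 1 := fun n => pow_le_one₀ hu0.le hu1.le
    have hpn : ∀ n : ℕ, 0 ≤ u ^ n := fun n => pow_nonneg hu0.le n
    have hg4 : |u ^ 3 * (1 + u ^ 2) ^ 2| ≤ 4 := by
      rw [abs_of_nonneg (by positivity)]
      nlinarith [hp 3, hp 5, hp 7, hpn 3, hpn 5, hpn 7]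
    have hh4 : |u * (1 - 2 * u ^ 4 - u ^ 6)| ≤ 4 := by
      rw [abs_le]
      constructor <;> nlinarith [hp 5, hp 7, hpn 5, hpn 7, hu0.le, hu1.le]
    have hQ : |c 6 * (u ^ 3 * (1 + u ^ 2) ^ 2) + c 8 * (u * (1 - 2 * u ^ 4 - u ^ 6))| ≤ |c 6| * 4 + |c 8| * 4 := by
      calc |c 6 * (u ^ 3 * (1 + u ^ 2) ^ 2) + c 8 * (u * (1 - 2 * u ^ 4 - u ^ 6))|
          ≤ |c 6 * (u ^ 3 * (1 + u ^ 2) ^ 2)| + |c 8 * (u * (1 - 2 * u ^ 4 - u ^ 6))| := abs_add_le _ _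
        _ = |c 6| * |u ^ 3 * (1 + u ^ 2) ^ 2| + |c 8| * |u * (1 - 2 * u ^ 4 - u ^ 6)| := by
            rw [abs_mul (c 6), abs_mul (c 8)]
        _ ≤ |c 6| * 4 + |c 8| * 4 :=
            add_le_add (mul_le_mul_of_nonneg_left hg4 (abs_nonneg _))
              (mul_le_mul_of_nonneg_left hh4 (abs_nonneg _))
    have key : c 0 + u * (c 7 + u * (c 1 + (-2)*c 8 + u * (c 5 + u * (c 2 + (-2)*c 6 + (2/3)*c 8 + u * ((2)*c 5 + (-2)*c 7 + u * (c 3 + (-10/3)*c 6 + (18/5)*c 8 + u * (c 5 + (-1)*c 7 + u * (c 4 + (-16/15)*c 6 + (20/21)*c 8 + u * ((0:ℝ) + u * ((16/105)*c 6 + (-4/45)*c 8 + u * ((0:ℝ) + u * ((-16/315)*c 6 + (4/385)*c 8 + u * ((0:ℝ) + u * ((16/693)*c 6 + (4/819)*c 8 + u * ((0:ℝ) + u * ((-16/1287)*c 6 + (-14/99)*c 8 + u * ((0:ℝ) + u * ((-18/143)*c 6 + (18/143)*c 8 + u * ((0:ℝ) + u * ((-2/13)*c 6 + (2/13)*c 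8))))))))))))))))))))
        = 2 * (Real.arctan u - (u - u^3/3 + u^5/5 - u^7/7 + u^9/9 - u^11/11 + u^13/13))
          * (c 6 * (u ^ 3 * (1 + u ^ 2) ^ 2) + c 8 * (u * (1 - 2 * u ^ 4 - u ^ 6))) := by
      linear_combination hP
    rw [key]
    calc |2 * (Real.arctan u - (u - u^3/3 + u^5/5 - u^7/7 + u^9/9 - u^11/11 + u^13/13))
          * (c 6 * (u ^ 3 * (1 + u ^ 2) ^ 2) + c 8 * (u * (1 - 2 * u ^ 4 - u ^ 6)))|
        = 2 * |Real.arctan u - (u - u^3/3 + u^5/5 - u^7/7 + u^9/9 - u^11/11 + u^13/13)|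
          * |c 6 * (u ^ 3 * (1 + u ^ 2) ^ 2) + c 8 * (u * (1 - 2 * u ^ 4 - u ^ 6))| := by
          rw [abs_mul, abs_mul]; norm_num
      _ ≤ 2 * (u^15/15) * (|c 6| * 4 + |c 8| * 4) := by
          apply mul_le_mul _ hQ (abs_nonneg _) (by positivity)
          have := mul_le_mul_of_nonneg_left hE (by norm_num : (0:ℝ) ≤ 2)
          linarith
      _ ≤ C * u ^ (13 + 1) := by
          rw [hCdef]
          have t0 : (0:ℝ) ≤ |c 6| + |c 8| := by positivity
          have t1 : u ^ 14 * u ≤ u ^ 14 * 1 := by nlinarith [pow_nonneg hu0.le 14]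
          nlinarith [mul_le_mul_of_nonneg_left t1 t0,
            mul_nonneg t0 (pow_nonneg hu0.le 14), mul_nonneg t0 (pow_nonneg hu0.le 15)]
  obtain ⟨e0, H1⟩ := step (fun u => c 7 + u * (c 1 + (-2)*c 8 + u * (c 5 + u * (c 2 + (-2)*c 6 + (2/3)*c 8 + u * ((2)*c 5 + (-2)*c 7 + u * (c 3 + (-10/3)*c 6 + (18/5)*c 8 + u * (c 5 + (-1)*c 7 + u * (c 4 + (-16/15)*c 6 + (20/21)*c 8 + u * ((0:ℝ) + u * ((16/105)*c 6 + (-4/45)*c 8 + u * ((0:ℝ) + u * ((-16/315)*c 6 + (4/385)*c 8 + u * ((0:ℝ) + u * ((16/693)*c 6 + (4/819)*c 8 + u * ((0:ℝ) + u * ((-16/1287)*c 6 + (-14/99)*c 8 + u * ((0:ℝ) + u * ((-18/143)*c 6 + (18/143)*c 8 + u * ((0:ℝ) + u * ((-2/13)*c 6 + (2/13)*c 8)))))))))))))))))))) (c 0) C hC (by fun_prop) 13 H0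
  obtain ⟨e1, H2⟩ := step (fun u => c 1 + (-2)*c 8 + u * (c 5 + u * (c 2 + (-2)*c 6 + (2/3)*c 8 + u * ((2)*c 5 + (-2)*c 7 + u * (c 3 + (-10/3)*c 6 + (18/5)*c 8 + u * (c 5 + (-1)*c 7 + u * (c 4 + (-16/15)*c 6 + (20/21)*c 8 + u * ((0:ℝ) + u * ((16/105)*c 6 + (-4/45)*c 8 + u * ((0:ℝ) + u * ((-16/315)*c 6 + (4/385)*c 8 + u * ((0:ℝ) + u * ((16/693)*c 6 + (4/819)*c 8 + u * ((0:ℝ) + u * ((-16/1287)*c 6 + (-14/99)*c 8 + u * ((0:ℝ) + u * ((-18/143)*c 6 + (18/143)*c 8 + u * ((0:ℝ) + u * ((-2/13)*c 6 + (2/13)*c 8))))))))))))))))))) (c 7) C hC (by fun_prop) 12 H1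
  obtain ⟨e2, H3⟩ := step (fun u => c 5 + u * (c 2 + (-2)*c 6 + (2/3)*c 8 + u * ((2)*c 5 + (-2)*c 7 + u * (c 3 + (-10/3)*c 6 + (18/5)*c 8 + u * (c 5 + (-1)*c 7 + u * (c 4 + (-16/15)*c 6 + (20/21)*c 8 + u * ((0:ℝ) + u * ((16/105)*c 6 + (-4/45)*c 8 + u * ((0:ℝ) + u * ((-16/315)*c 6 + (4/385)*c 8 + u * ((0:ℝ) + u * ((16/693)*c 6 + (4/819)*c 8 + u * ((0:ℝ) + u * ((-16/1287)*c 6 + (-14/99)*c 8 + u * ((0:ℝ) + u * ((-18/143)*c 6 + (18/143)*c 8 + u * ((0:ℝ) + u * ((-2/13)*c 6 + (2/13)*c 8)))))))))))))))))) (c 1 + (-2)*c 8) C hC (by fun_prop) 11 H2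
  obtain ⟨e3, H4⟩ := step (fun u => c 2 + (-2)*c 6 + (2/3)*c 8 + u * ((2)*c 5 + (-2)*c 7 + u * (c 3 + (-10/3)*c 6 + (18/5)*c 8 + u * (c 5 + (-1)*c 7 + u * (c 4 + (-16/15)*c 6 + (20/21)*c 8 + u * ((0:ℝ) + u * ((16/105)*c 6 + (-4/45)*c 8 + u * ((0:ℝ) + u * ((-16/315)*c 6 + (4/385)*c 8 + u * ((0:ℝ) + u * ((16/693)*c 6 + (4/819)*c 8 + u * ((0:ℝ) + u * ((-16/1287)*c 6 + (-14/99)*c 8 + u * ((0:ℝ) + u * ((-18/143)*c 6 + (18/143)*c 8 + u * ((0:ℝ) + u * ((-2/13)*c 6 + (2/13)*c 8))))))))))))))))) (c 5) C hC (by fun_prop) 10 H3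
  obtain ⟨e4, H5⟩ := step (fun u => (2)*c 5 + (-2)*c 7 + u * (c 3 + (-10/3)*c 6 + (18/5)*c 8 + u * (c 5 + (-1)*c 7 + u * (c 4 + (-16/15)*c 6 + (20/21)*c 8 + u * ((0:ℝ) + u * ((16/105)*c 6 + (-4/45)*c 8 + u * ((0:ℝ) + u * ((-16/315)*c 6 + (4/385)*c 8 + u * ((0:ℝ) + u * ((16/693)*c 6 + (4/819)*c 8 + u * ((0:ℝ) + u * ((-16/1287)*c 6 + (-14/99)*c 8 + u * ((0:ℝ) + u * ((-18/143)*c 6 + (18/143)*c 8 + u * ((0:ℝ) + u * ((-2/13)*c 6 + (2/13)*c 8)))))))))))))))) (c 2 + (-2)*c 6 + (2/3)*c 8) C hC (by fun_prop) 9 H4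
  obtain ⟨e5, H6⟩ := step (fun u => c 3 + (-10/3)*c 6 + (18/5)*c 8 + u * (c 5 + (-1)*c 7 + u * (c 4 + (-16/15)*c 6 + (20/21)*c 8 + u * ((0:ℝ) + u * ((16/105)*c 6 + (-4/45)*c 8 + u * ((0:ℝ) + u * ((-16/315)*c 6 + (4/385)*c 8 + u * ((0:ℝ) + u * ((16/693)*c 6 + (4/819)*c 8 + u * ((0:ℝ) + u * ((-16/1287)*c 6 + (-14/99)*c 8 + u * ((0:ℝ) + u * ((-18/143)*c 6 + (18/143)*c 8 + u * ((0:ℝ) + u * ((-2/13)*c 6 + (2/13)*c 8))))))))))))))) ((2)*c 5 + (-2)*c 7) C hC (by fun_prop) 8 H5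
  obtain ⟨e6, H7⟩ := step (fun u => c 5 + (-1)*c 7 + u * (c 4 + (-16/15)*c 6 + (20/21)*c 8 + u * ((0:ℝ) + u * ((16/105)*c 6 + (-4/45)*c 8 + u * ((0:ℝ) + u * ((-16/315)*c 6 + (4/385)*c 8 + u * ((0:ℝ) + u * ((16/693)*c 6 + (4/819)*c 8 + u * ((0:ℝ) + u * ((-16/1287)*c 6 + (-14/99)*c 8 + u * ((0:ℝ) + u * ((-18/143)*c 6 + (18/143)*c 8 + u * ((0:ℝ) + u * ((-2/13)*c 6 + (2/13)*c 8)))))))))))))) (c 3 + (-10/3)*c 6 + (18/5)*c 8) C hC (by fun_prop) 7 H6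
  obtain ⟨e7, H8⟩ := step (fun u => c 4 + (-16/15)*c 6 + (20/21)*c 8 + u * ((0:ℝ) + u * ((16/105)*c 6 + (-4/45)*c 8 + u * ((0:ℝ) + u * ((-16/315)*c 6 + (4/385)*c 8 + u * ((0:ℝ) + u * ((16/693)*c 6 + (4/819)*c 8 + u * ((0:ℝ) + u * ((-16/1287)*c 6 + (-14/99)*c 8 + u * ((0:ℝ) + u * ((-18/143)*c 6 + (18/143)*c 8 + u * ((0:ℝ) + u * ((-2/13)*c 6 + (2/13)*c 8))))))))))))) (c 5 + (-1)*c 7) C hC (by fun_prop) 6 H7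
  obtain ⟨e8, H9⟩ := step (fun u => (0:ℝ) + u * ((16/105)*c 6 + (-4/45)*c 8 + u * ((0:ℝ) + u * ((-16/315)*c 6 + (4/385)*c 8 + u * ((0:ℝ) + u * ((16/693)*c 6 + (4/819)*c 8 + u * ((0:ℝ) + u * ((-16/1287)*c 6 + (-14/99)*c 8 + u * ((0:ℝ) + u * ((-18/143)*c 6 + (18/143)*c 8 + u * ((0:ℝ) + u * ((-2/13)*c 6 + (2/13)*c 8)))))))))))) (c 4 + (-16/15)*c 6 + (20/21)*c 8) C hC (by fun_prop) 5 H8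
  obtain ⟨e9, H10⟩ := step (fun u => (16/105)*c 6 + (-4/45)*c 8 + u * ((0:ℝ) + u * ((-16/315)*c 6 + (4/385)*c 8 + u * ((0:ℝ) + u * ((16/693)*c 6 + (4/819)*c 8 + u * ((0:ℝ) + u * ((-16/1287)*c 6 + (-14/99)*c 8 + u * ((0:ℝ) + u * ((-18/143)*c 6 + (18/143)*c 8 + u * ((0:ℝ) + u * ((-2/13)*c 6 + (2/13)*c 8))))))))))) ((0:ℝ)) C hC (by fun_prop) 4 H9
  obtain ⟨e10, H11⟩ := step (fun u => (0:ℝ) + u * ((-16/315)*c 6 + (4/385)*c 8 + u * ((0:ℝ) + u * ((16/693)*c 6 + (4/819)*c 8 + u * ((0:ℝ) + u * ((-16/1287)*c 6 + (-14/99)*c 8 + u * ((0:ℝ) + u * ((-18/143)*c 6 + (18/143)*c 8 + u * ((0:ℝ) + u * ((-2/13)*c 6 + (2/13)*c 8)))))))))) ((16/105)*c 6 + (-4/45)*c 8) C hC (by fun_prop) 3 H10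
  obtain ⟨e11, H12⟩ := step (fun u => (-16/315)*c 6 + (4/385)*c 8 + u * ((0:ℝ) + u * ((16/693)*c 6 + (4/819)*c 8 + u * ((0:ℝ) + u * ((-16/1287)*c 6 + (-14/99)*c 8 + u * ((0:ℝ) + u * ((-18/143)*c 6 + (18/143)*c 8 + u * ((0:ℝ) + u * ((-2/13)*c 6 + (2/13)*c 8))))))))) ((0:ℝ)) C hC (by fun_prop) 2 H11
  obtain ⟨e12, H13⟩ := step (fun u => (0:ℝ) + u * ((16/693)*c 6 + (4/819)*c 8 + u * ((0:ℝ) + u * ((-16/1287)*c 6 + (-14/99)*c 8 + u * ((0:ℝ) + u * ((-18/143)*c 6 + (18/143)*c 8 + u * ((0:ℝ) + u * ((-2/13)*c 6 + (2/13)*c 8)))))))) ((-16/315)*c 6 + (4/385)*c 8) C hC (by fun_prop) 1 H12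
  obtain ⟨e13, H14⟩ := step (fun u => (16/693)*c 6 + (4/819)*c 8 + u * ((0:ℝ) + u * ((-16/1287)*c 6 + (-14/99)*c 8 + u * ((0:ℝ) + u * ((-18/143)*c 6 + (18/143)*c 8 + u * ((0:ℝ) + u * ((-2/13)*c 6 + (2/13)*c 8))))))) ((0:ℝ)) C hC (by fun_prop) 0 H13
  have z6 : c 6 = 0 := by linarith [e10, e12]
  have z8 : c 8 = 0 := by linarith [e10, e12]
  have z1 : c 1 = 0 := by linarith [e2]
  have z2 : c 2 = 0 := by linarith [e4]
  have z3 : c 3 = 0 := by linarith [e6]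
  have z4 : c 4 = 0 := by linarith [e8]
  intro i
  fin_cases i
  · exact e0
  · exact z1
  · exact z2
  · exact z3
  · exact z4
  · exact e3
  · exact z6
  · exact e1
  · exact z8
end
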